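/- Let A₂(n) denote the number of permutations of length n containing no 132 pattern and exactly two 123 patterns. Then in ℚ[[z]], the generating function F₂(z) = ∑_{n≥0} A₂(n)·zⁿ satisfies (1 - 2z)³·F₂(z) = z⁴·(1 - z). -/

import Mathlib

/-- The number of 132 patterns of a permutation `π` of `Fin n`:
triples of indices `i₁ < i₂ < i₃` with `π i₁ < π i₃ < π i₂`. -/
def count132 {n : ℕ} (π : Equiv.Perm (Fin n)) : ℕ :=
  (Finset.univ.filter (fun p : Fin n × Fin n × Fin n =>
    p.1 < p.2.1 ∧ p.2.1 < p.2.2 ∧ π p.1 < π p.2.2 ∧ π p.2.2 < π p.2.1)).card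

/-- The number of 123 patterns of a permutation `π` of `Fin n`:
triples of indices `i₁ < i₂ < i₃` with `π i₁ < π i₂ < π i₃`. -/
def count123 {n : ℕ} (π : Equiv.Perm (Fin n)) : ℕ :=
  (Finset.univ.filter (fun p : Fin n × Fin n × Fin n =>
    p.1 < p.2.1 ∧ p.2.1 < p.2.2 ∧ π p.1 < π p.2.1 ∧ π p.2.1 < π p.2.2)).card

/-- The number of 12 patterns of a permutation `π` of `Fin n`:
pairs of indices `i₁ < i₂` with `π i₁ < π i₂`. -/
def count12 {n : ℕ} (π : Equiv.Perm (Fin n)) : ℕ :=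
  (Finset.univ.filter (fun p : Fin n × Fin n =>
    p.1 < p.2 ∧ π p.1 < π p.2)).card

/-- The number of permutations of length n with no 132 pattern and exactly 2 123 patterns. -/
def A (n : ℕ) : ℕ :=
  (Finset.univ.filter (fun π : Equiv.Perm (Fin n) =>
    count132 π = 0 ∧ count123 π = 2)).card

/-!
In a 132-avoiding permutation of length `n + 1`, every entry to the left of the maximum `n`
exceeds every entry to its right. So its one-line notation is `σ + b, n, τ` for 132-avoiding `σ`,
`τ` of lengths `a + b = n`, and each such word is a 132-avoiding permutation. Its 12-patterns are
those of `σ` and of `τ` plus the `a` pairs ending at `n`; its 123-patterns are those of `σ` and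
of `τ` plus one for each 12-pattern of `σ`, completed by `n`. As a 123-pattern contains three
12-patterns, the generating functions of 132-avoiders with at most two 12-patterns, resp. at
most two 123-patterns, satisfy a closed triangular system of equations, whose solution is the
claim.
-/

open scoped Finset

namespace List

variable {α β : Type*}

def pairCount (R : α → α → Prop) [DecidableRel R] : List α → ℕ
  | [] => 0
  | x :: xs => xs.countP (fun y => R x y) + pairCount R xs

def tripleCount (T : α → α → α → Prop) [∀ x, DecidableRel (T x)] : List α → ℕ
  | [] => 0
  | x :: xs => pairCount (T x) xs + tripleCount T xs

section Relation

open Finset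

variable (R : α → α → Prop) [DecidableRel R]
  (T : α → α → α → Prop) [∀ x, DecidableRel (T x)]

theorem countP_ofFn {n : ℕ} (p : α → Prop) [DecidablePred p] (f : Fin n → α) :
    (ofFn f).countP (fun x => p x) = #{i | p (f i)} := by
  induction n with
  | zero => simp
  | succ n ih =>
    rw [ofFn_succ, countP_cons, ih, card_filter, card_filter, Fin.sum_univ_succ]
    simp only [decide_eq_true_eq]
    omega

theorem pairCount_ofFn {n : ℕ} (f : Fin n → α) :
    pairCount R (ofFn f) = #{p : Fin n × Fin n | p.1 < p.2 ∧ R (f p.1) (f p.2)} := by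
  induction n with
  | zero => simp [pairCount]
  | succ n ih =>
    rw [ofFn_succ, pairCount, ih, countP_ofFn (R (f 0))]
    simp only [card_filter, Fintype.sum_prod_type, Fin.sum_univ_succ, Fin.succ_lt_succ_iff,
      Fin.succ_pos, Fin.not_lt_zero, false_and, true_and, if_false, zero_add]

theorem tripleCount_ofFn {n : ℕ} (f : Fin n → α) :
    tripleCount T (ofFn f) = #{p : Fin n × Fin n × Fin n |
      p.1 < p.2.1 ∧ p.2.1 < p.2.2 ∧ T (f p.1) (f p.2.1) (f p.2.2)} := by
  induction n with
  | zero => simp [tripleCount]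
  | succ n ih =>
    rw [ofFn_succ, tripleCount, ih, pairCount_ofFn]
    simp only [card_filter, Fintype.sum_prod_type, Fin.sum_univ_succ, Fin.succ_lt_succ_iff,
      Fin.succ_pos, Fin.not_lt_zero, false_and, true_and, if_false, zero_add, and_false,
      sum_const_zero]

theorem pairCount_map (f : β → α) (l : List β) :
    pairCount R (l.map f) = pairCount (fun x y => R (f x) (f y)) l := by
  induction l with
  | nil => rfl
  | cons x l ih => simp only [map_cons, pairCount, ih, countP_map]; rfl

theorem tripleCount_map (f : β → α) (l : List β) :
    tripleCount T (l.map f) = tripleCount (fun x y z => T (f x) (f y) (f z)) l := by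
  induction l with
  | nil => rfl
  | cons x l ih => simp only [map_cons, tripleCount, ih, pairCount_map]

theorem Sublist.pairCount_le {l₁ l₂ : List α} (h : l₁ <+ l₂) :
    pairCount R l₁ ≤ pairCount R l₂ := by
  induction h with
  | slnil => rfl
  | cons x _ ih => exact ih.trans (Nat.le_add_left _ _)
  | cons_cons x h ih => exact Nat.add_le_add h.countP_le ih

theorem pairCount_pos_iff {l : List α} :
    0 < pairCount R l ↔ ∃ x y, [x, y] <+ l ∧ R x y := by
  induction l with
  | nil => simp [pairCount]
  | cons x l ih =>
    simp only [pairCount, Nat.add_pos_iff_pos_or_pos, countP_pos_iff, ih, decide_eq_true_eq]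
    constructor
    · rintro (⟨y, hy, hxy⟩ | ⟨y, z, h, hyz⟩)
      · exact ⟨x, y, (singleton_sublist.2 hy).cons_cons x, hxy⟩
      · exact ⟨y, z, h.cons x, hyz⟩
    · rintro ⟨y, z, h, hyz⟩
      cases h with
      | cons _ h => exact Or.inr ⟨y, z, h, hyz⟩
      | cons_cons _ h => exact Or.inl ⟨z, singleton_sublist.1 h, hyz⟩

theorem tripleCount_pos_iff {l : List α} :
    0 < tripleCount T l ↔ ∃ x y z, [x, y, z] <+ l ∧ T x y z := by
  induction l with
  | nil => simp [tripleCount]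
  | cons x l ih =>
    simp only [tripleCount, Nat.add_pos_iff_pos_or_pos, pairCount_pos_iff, ih]
    constructor
    · rintro (⟨y, z, h, hxyz⟩ | ⟨y, z, w, h, hyzw⟩)
      · exact ⟨x, y, z, h.cons_cons x, hxyz⟩
      · exact ⟨y, z, w, h.cons x, hyzw⟩
    · rintro ⟨y, z, w, h, hyzw⟩
      cases h with
      | cons _ h => exact Or.inr ⟨y, z, w, h, hyzw⟩
      | cons_cons _ h => exact Or.inl ⟨z, w, h, hyzw⟩

theorem pairCount_eq_zero {l : List α} (h : ∀ y ∈ l, ∀ z ∈ l, ¬R y z) :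
    pairCount R l = 0 := by
  induction l with
  | nil => rfl
  | cons x l ih =>
    rw [pairCount, ih fun y hy z hz => h y (mem_cons_of_mem _ hy) z (mem_cons_of_mem _ hz),
      countP_eq_zero.2 fun y hy => by simpa using h x mem_cons_self y (mem_cons_of_mem _ hy)]

theorem pairCount_append_cons {l₁ l₂ : List α} (m : α)
    (h : ∀ y ∈ l₁, ∀ z ∈ l₂, ¬R y z) :
    pairCount R (l₁ ++ m :: l₂) =
      pairCount R l₁ + l₁.countP (fun y => R y m) + pairCount R (m :: l₂) := by
  induction l₁ with
  | nil => simp [pairCount]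
  | cons x l₁ ih =>
    have hx : l₂.countP (fun z => R x z) = 0 :=
      countP_eq_zero.2 (by simpa using h x mem_cons_self)
    simp only [cons_append, pairCount] at ih ⊢
    rw [ih fun y hy => h y (mem_cons_of_mem _ hy), countP_append, countP_cons, countP_cons, hx]
    omega

end Relation

section LinearOrder

variable [LinearOrder α] {l₁ l₂ : List α} {m : α}

theorem pairCount_lt_append_cons (h₁ : ∀ x ∈ l₁, x < m) (h₂ : ∀ y ∈ l₂, y < m)
    (h₁₂ : ∀ x ∈ l₁, ∀ y ∈ l₂, y < x) :
    pairCount (· < ·) (l₁ ++ m :: l₂) =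
      pairCount (· < ·) l₁ + l₁.length + pairCount (· < ·) l₂ := by
  rw [pairCount_append_cons _ _ fun x hx y hy => (h₁₂ x hx y hy).asymm,
    countP_eq_length.2 (by simpa using h₁), pairCount,
    countP_eq_zero.2 (by simpa using fun y hy => (h₂ y hy).le), zero_add]

theorem tripleCount_123_append_cons (h₁ : ∀ x ∈ l₁, x < m) (h₂ : ∀ y ∈ l₂, y < m)
    (h₁₂ : ∀ x ∈ l₁, ∀ y ∈ l₂, y < x) :
    tripleCount (fun x y z => x < y ∧ y < z) (l₁ ++ m :: l₂) =
      tripleCount (fun x y z => x < y ∧ y < z) l₁ + pairCount (· < ·) l₁ +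
        tripleCount (fun x y z => x < y ∧ y < z) l₂ := by
  induction l₁ with
  | nil =>
    have : pairCount (fun y z => m < y ∧ y < z) l₂ = 0 :=
      pairCount_eq_zero _ fun y hy _ _ h => (h₂ y hy).asymm h.1
    simp [tripleCount, pairCount, this]
  | cons x l₁ ih =>
    have hx := h₁ x mem_cons_self
    have key : pairCount (fun y z => x < y ∧ y < z) (l₁ ++ m :: l₂) =
        pairCount (fun y z => x < y ∧ y < z) l₁ + l₁.countP (fun y => x < y) := by
      have hm : l₂.countP (fun z => x < m ∧ m < z) = 0 :=
        countP_eq_zero.2 (by simpa using fun z hz _ => (h₂ z hz).le)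
      have h₂' : pairCount (fun y z => x < y ∧ y < z) l₂ = 0 :=
        pairCount_eq_zero _ fun y hy _ _ h => (h₁₂ x mem_cons_self y hy).asymm h.1
      have hl₁ : l₁.countP (fun y => x < y ∧ y < m) = l₁.countP (fun y => x < y) :=
        countP_congr fun y hy => by simp [h₁ y (mem_cons_of_mem _ hy)]
      rw [pairCount_append_cons _ _
          fun y _ z hz h => (h₁₂ x mem_cons_self z hz).asymm (h.1.trans h.2),
        pairCount, hm, h₂', hl₁]
      rfl
    simp only [cons_append, tripleCount, pairCount, key,
      ih (fun y hy => h₁ y (mem_cons_of_mem _ hy)) (fun y hy => h₁₂ y (mem_cons_of_mem _ hy))]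
    omega

theorem tripleCount_132_append_cons (h₁ : ∀ x ∈ l₁, x < m) (h₂ : ∀ y ∈ l₂, y < m)
    (h₁₂ : ∀ x ∈ l₁, ∀ y ∈ l₂, y < x) :
    tripleCount (fun x y z => x < z ∧ z < y) (l₁ ++ m :: l₂) =
      tripleCount (fun x y z => x < z ∧ z < y) l₁ +
        tripleCount (fun x y z => x < z ∧ z < y) l₂ := by
  induction l₁ with
  | nil =>
    have : pairCount (fun y z => m < z ∧ z < y) l₂ = 0 :=
      pairCount_eq_zero _ fun _ _ z hz h => (h₂ z hz).asymm h.1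
    simp [tripleCount, this]
  | cons x l₁ ih =>
    have key : pairCount (fun y z => x < z ∧ z < y) (l₁ ++ m :: l₂) =
        pairCount (fun y z => x < z ∧ z < y) l₁ := by
      have hm : l₂.countP (fun z => x < z ∧ z < m) = 0 :=
        countP_eq_zero.2 fun z hz h => (h₁₂ x mem_cons_self z hz).asymm (of_decide_eq_true h).1
      have h₂' : pairCount (fun y z => x < z ∧ z < y) l₂ = 0 :=
        pairCount_eq_zero _ fun _ _ z hz h => (h₁₂ x mem_cons_self z hz).asymm h.1
      have hl₁ : l₁.countP (fun y => x < m ∧ m < y) = 0 :=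
        countP_eq_zero.2 (by simpa using fun y hy _ => (h₁ y (mem_cons_of_mem _ hy)).le)
      rw [pairCount_append_cons _ _ fun y _ z hz h => (h₁₂ x mem_cons_self z hz).asymm h.1,
        pairCount, hm, h₂', hl₁]
      rfl
    simp only [cons_append, tripleCount, key,
      ih (fun y hy => h₁ y (mem_cons_of_mem _ hy)) (fun y hy => h₁₂ y (mem_cons_of_mem _ hy))]
    omega

end LinearOrder

theorem lt_length_of_forall_le_mem {l : List ℕ} {y : ℕ} (h : ∀ z ≤ y, z ∈ l) :
    y < l.length := by
  simpa using nodup_range.length_le_of_subset fun z hz => h z (Nat.lt_succ_iff.1 (mem_range.1 hz))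

theorem Nodup.length_le_of_forall_lt {l : List ℕ} {x : ℕ} (hl : l.Nodup)
    (h : ∀ y ∈ l, y < x) :
    l.length ≤ x :=
  (hl.length_le_of_subset fun y hy => mem_range.2 (h y hy)).trans_eq length_range

end List

abbrev occ12 (l : List ℕ) : ℕ := l.pairCount (· < ·)

abbrev occ123 (l : List ℕ) : ℕ := l.tripleCount fun x y z => x < y ∧ y < z

abbrev occ132 (l : List ℕ) : ℕ := l.tripleCount fun x y z => x < z ∧ z < y

open Equiv

section OneLine

open List

variable {n : ℕ}

def oneLine (π : Perm (Fin n)) : List ℕ := ofFn fun i => (π i : ℕ)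

@[simp] theorem length_oneLine (π : Perm (Fin n)) : (oneLine π).length = n := by simp [oneLine]

@[simp] theorem mem_oneLine (π : Perm (Fin n)) {x : ℕ} : x ∈ oneLine π ↔ x < n := by
  simp only [oneLine, mem_ofFn]
  exact ⟨fun ⟨i, hi⟩ => hi ▸ (π i).isLt, fun hx => ⟨π.symm ⟨x, hx⟩, by simp⟩⟩

theorem nodup_oneLine (π : Perm (Fin n)) : (oneLine π).Nodup :=
  nodup_ofFn.2 (Fin.val_injective.comp π.injective)

theorem oneLine_injective : Function.Injective (oneLine : Perm (Fin n) → List ℕ) :=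
  fun _ _ h => Equiv.ext fun i => Fin.ext (congrFun (ofFn_injective h) i)

theorem exists_oneLine_eq {l : List ℕ} (hlen : l.length = n) (hnd : l.Nodup)
    (hlt : ∀ x ∈ l, x < n) : ∃ π : Perm (Fin n), oneLine π = l := by
  subst hlen
  let f : Fin l.length → Fin l.length := fun i => ⟨l[i], hlt _ (getElem_mem _)⟩
  have hf : Function.Injective f := fun i j h =>
    Fin.ext ((hnd.getElem_inj_iff).1 (congrArg Fin.val h))
  exact ⟨Equiv.ofBijective f (Finite.injective_iff_bijective.1 hf),
    ext_getElem (by simp) (by simp [oneLine, f])⟩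

theorem count123_eq_occ123 (π : Perm (Fin n)) : count123 π = occ123 (oneLine π) := by
  rw [occ123, oneLine, tripleCount_ofFn]
  rfl

theorem count132_eq_occ132 (π : Perm (Fin n)) : count132 π = occ132 (oneLine π) := by
  rw [occ132, oneLine, tripleCount_ofFn]
  rfl

end OneLine

section Glue

open List

variable {a b : ℕ}

def glue (σ : Perm (Fin a)) (τ : Perm (Fin b)) : List ℕ :=
  (oneLine σ).map (· + b) ++ (a + b) :: oneLine τ

theorem glue_blocks (σ : Perm (Fin a)) (τ : Perm (Fin b)) :
    (∀ x ∈ (oneLine σ).map (· + b), x < a + b) ∧ (∀ y ∈ oneLine τ, y < a + b) ∧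
      ∀ x ∈ (oneLine σ).map (· + b), ∀ y ∈ oneLine τ, y < x := by
  simp only [mem_map, mem_oneLine]
  refine ⟨?_, fun y hy => by omega, ?_⟩ <;> rintro _ ⟨x, hx, rfl⟩ <;> omega

theorem occ132_glue (σ : Perm (Fin a)) (τ : Perm (Fin b)) :
    occ132 (glue σ τ) = occ132 (oneLine σ) + occ132 (oneLine τ) := by
  obtain ⟨h₁, h₂, h₁₂⟩ := glue_blocks σ τ
  simp only [occ132, glue, tripleCount_132_append_cons h₁ h₂ h₁₂, tripleCount_map,
    add_lt_add_iff_right]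

theorem occ123_glue (σ : Perm (Fin a)) (τ : Perm (Fin b)) :
    occ123 (glue σ τ) = (occ123 (oneLine σ) + occ12 (oneLine σ)) + occ123 (oneLine τ) := by
  obtain ⟨h₁, h₂, h₁₂⟩ := glue_blocks σ τ
  simp only [occ123, occ12, glue, tripleCount_123_append_cons h₁ h₂ h₁₂, tripleCount_map,
    pairCount_map, add_lt_add_iff_right]

theorem occ12_glue (σ : Perm (Fin a)) (τ : Perm (Fin b)) :
    occ12 (glue σ τ) = (occ12 (oneLine σ) + a) + occ12 (oneLine τ) := by
  obtain ⟨h₁, h₂, h₁₂⟩ := glue_blocks σ τ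
  simp only [occ12, glue, pairCount_lt_append_cons h₁ h₂ h₁₂, pairCount_map,
    add_lt_add_iff_right, length_map, length_oneLine]

theorem exists_oneLine_eq_glue (σ : Perm (Fin a)) (τ : Perm (Fin b)) :
    ∃ π : Perm (Fin (a + b + 1)), oneLine π = glue σ τ := by
  obtain ⟨h₁, h₂, h₁₂⟩ := glue_blocks σ τ
  refine exists_oneLine_eq (by simp [glue]; omega) ?_ ?_
  · refine nodup_middle.2 (nodup_cons.2 ⟨?_, nodup_append.2 ⟨?_, nodup_oneLine τ, ?_⟩⟩)
    · simp only [mem_append, not_or]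
      exact ⟨fun h => (h₁ _ h).false, fun h => (h₂ _ h).false⟩
    · exact (nodup_oneLine σ).map (add_left_injective b)
    · exact fun x hx y hy => (h₁₂ x hx y hy).ne'
  · simp only [glue, mem_append, mem_cons]
    rintro x (hx | rfl | hx)
    exacts [(h₁ x hx).trans (Nat.lt_succ_self _), Nat.lt_succ_self _,
      (h₂ x hx).trans (Nat.lt_succ_self _)]

theorem le_of_occ132_append_cons_eq_zero {F B : List ℕ} {m x y : ℕ}
    (h : occ132 (F ++ m :: B) = 0) (hx : x ∈ F) (hy : y ∈ B) (hym : y < m) : y ≤ x :=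
  not_lt.1 fun hxy => h.not_gt <| (tripleCount_pos_iff _).2
    ⟨x, m, y, (singleton_sublist.2 hx).append ((singleton_sublist.2 hy).cons_cons m), hxy, hym⟩

theorem exists_glue_eq_oneLine {n : ℕ} (π : Perm (Fin (n + 1))) (hπ : count132 π = 0) :
    ∃ a b, ∃ (σ : Perm (Fin a)) (τ : Perm (Fin b)),
      a + b = n ∧ glue σ τ = oneLine π := by
  obtain ⟨F, B, hl⟩ := append_of_mem ((mem_oneLine π).2 (Nat.lt_succ_self n))
  have hnd := nodup_oneLine π
  rw [hl, nodup_middle, nodup_cons, nodup_append] at hnd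
  obtain ⟨hn, hFnd, hBnd, hFB⟩ := hnd
  have hmem : ∀ x, x ∈ F ∨ x = n ∨ x ∈ B ↔ x < n + 1 := fun x => by
    rw [← mem_oneLine π, hl]; simp
  have hlen : F.length + B.length = n := by
    have := congrArg length hl
    simp only [length_oneLine, length_append, length_cons] at this
    omega
  have hBn : ∀ y ∈ B, y < n := fun y hy =>
    lt_of_le_of_ne (Nat.lt_succ_iff.1 ((hmem y).1 (by simp [hy])))
      fun h => hn (h ▸ mem_append_right F hy)
  rw [count132_eq_occ132, hl] at hπ
  have hsep : ∀ x ∈ F, ∀ y ∈ B, y < x := fun x hx y hy =>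
    lt_of_le_of_ne (le_of_occ132_append_cons_eq_zero hπ hx hy (hBn y hy)) (hFB x hx y hy).symm
  -- Below `n`, the entries of `B` form an initial segment, since those of `F` lie above them.
  have hB : ∀ y ∈ B, y < B.length := fun y hy => lt_length_of_forall_le_mem fun z hz => by
    rcases (hmem z).2 (by have := hBn y hy; omega) with hz' | rfl | hz'
    · exact absurd (hsep z hz' y hy) (not_lt.2 hz)
    · exact absurd (hBn y hy) (not_lt.2 hz)
    · exact hz'
  have hF : ∀ x ∈ F, B.length ≤ x ∧ x < n := fun x hx =>
    ⟨hBnd.length_le_of_forall_lt fun y hy => hsep x hx y hy,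
      lt_of_le_of_ne (Nat.lt_succ_iff.1 ((hmem x).1 (Or.inl hx)))
        fun h => hn (h ▸ mem_append_left B hx)⟩
  obtain ⟨σ, hσ⟩ := exists_oneLine_eq (l := F.map (· - B.length)) (length_map _)
    (hFnd.map_on fun x hx y hy h => by have := hF x hx; have := hF y hy; omega)
    (by simp only [mem_map]; rintro _ ⟨x, hx, rfl⟩; have := hF x hx; omega)
  obtain ⟨τ, hτ⟩ := exists_oneLine_eq rfl hBnd hB
  refine ⟨_, _, σ, τ, hlen, ?_⟩
  rw [glue, hσ, hτ, map_map, hlen, hl]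
  congr 1
  exact (map_congr_left fun x hx => Nat.sub_add_cancel (hF x hx).1).trans (map_id' F)

theorem glue_injective : Function.Injective
    fun x : Σ ab : ℕ × ℕ, Perm (Fin ab.1) × Perm (Fin ab.2) => glue x.2.1 x.2.2 := by
  rintro ⟨⟨a, b⟩, σ, τ⟩ ⟨⟨a', b'⟩, σ', τ'⟩ h
  have hsum : a + b = a' + b' := by
    have := congrArg length h
    simp only [glue, length_append, length_map, length_cons, length_oneLine] at this
    omega
  obtain ⟨h₁, h₂, -⟩ := glue_blocks σ τ
  obtain ⟨hσ, -, hτ⟩ := (append_cons_inj_of_notMem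
    (by rw [← hsum]; exact fun h => (h₁ _ h).false)
    (by rw [← hsum]; exact fun h => (h₂ _ h).false)).1 h
  have hb : b = b' := by simpa using congrArg length hτ
  have ha : a = a' := by simpa using congrArg length hσ
  subst ha hb
  have hτ' : τ = τ' := oneLine_injective hτ
  have hσ' : σ = σ' := oneLine_injective (map_injective_iff.2 (add_left_injective b) hσ)
  rw [hσ', hτ']

def GlueAdditive (s sf sb : List ℕ → ℕ) : Prop :=
  ∀ a b (σ : Perm (Fin a)) (τ : Perm (Fin b)),
    s (glue σ τ) = sf (oneLine σ) + sb (oneLine τ)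

theorem glueAdditive_occ12 : GlueAdditive occ12 (fun l => occ12 l + l.length) occ12 :=
  fun _ _ σ τ => by simp only [occ12_glue, length_oneLine]

theorem glueAdditive_occ123 : GlueAdditive occ123 (fun l => occ123 l + occ12 l) occ123 :=
  fun _ _ => occ123_glue

end Glue

open Finset

theorem Finset.card_filter_prod_add_eq {α β : Type*} [Fintype α] [Fintype β]
    (p : α → Prop) (q : β → Prop) [DecidablePred p] [DecidablePred q]
    (f : α → ℕ) (g : β → ℕ) (k : ℕ) :
    #{x : α × β | (p x.1 ∧ q x.2) ∧ f x.1 + g x.2 = k} =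
      ∑ ij ∈ antidiagonal k, #{x | p x ∧ f x = ij.1} * #{y | q y ∧ g y = ij.2} := by
  rw [card_eq_sum_card_fiberwise (f := fun x => (f x.1, g x.2)) (t := antidiagonal k)
    fun x hx => by simpa using (mem_filter.1 hx).2.2]
  refine sum_congr rfl fun ⟨i, j⟩ hij => ?_
  rw [HasAntidiagonal.mem_antidiagonal] at hij
  rw [← card_product]
  congr 1
  ext ⟨x, y⟩
  simp only [mem_filter, mem_univ, true_and, mem_product, Prod.mk.injEq]
  constructor
  · rintro ⟨⟨⟨hp, hq⟩, -⟩, rfl, rfl⟩; exact ⟨⟨hp, rfl⟩, hq, rfl⟩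
  · rintro ⟨⟨hp, rfl⟩, hq, rfl⟩; exact ⟨⟨⟨hp, hq⟩, hij⟩, rfl, rfl⟩

def avoiderCount (s : List ℕ → ℕ) (k n : ℕ) : ℕ :=
  #{π : Perm (Fin n) | count132 π = 0 ∧ s (oneLine π) = k}

theorem avoiderCount_zero (s : List ℕ → ℕ) (k : ℕ) :
    avoiderCount s k 0 = if s [] = k then 1 else 0 := by
  simp [avoiderCount, count132, oneLine, apply_ite card]

theorem avoiderCount_succ {s sf sb : List ℕ → ℕ} (hs : GlueAdditive s sf sb) (k n : ℕ) :
    avoiderCount s k (n + 1) = ∑ ab ∈ antidiagonal n, ∑ ij ∈ antidiagonal k,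
      avoiderCount sf ij.1 ab.1 * avoiderCount sb ij.2 ab.2 := by
  let S := (antidiagonal n).sigma fun ab => ({x : Perm (Fin ab.1) × Perm (Fin ab.2) |
    (count132 x.1 = 0 ∧ count132 x.2 = 0) ∧ sf (oneLine x.1) + sb (oneLine x.2) = k} : Finset _)
  have hS : avoiderCount s k (n + 1) = #S := by
    rw [avoiderCount, ← card_image_of_injective _ oneLine_injective,
      ← card_image_of_injective S glue_injective]
    congr 1
    ext l
    simp only [S, Finset.mem_image, Finset.mem_filter, Finset.mem_univ, true_and,
      Finset.mem_sigma, HasAntidiagonal.mem_antidiagonal, Sigma.exists, Prod.exists]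
    constructor
    · rintro ⟨π, ⟨hπ, rfl⟩, rfl⟩
      obtain ⟨a, b, σ, τ, hab, hg⟩ := exists_glue_eq_oneLine π hπ
      rw [count132_eq_occ132, ← hg, occ132_glue] at hπ
      refine ⟨a, b, σ, τ, ⟨hab, ?_, ?_⟩, hg⟩
      · rw [count132_eq_occ132, count132_eq_occ132]; omega
      · rw [← hs, hg]
    · rintro ⟨a, b, σ, τ, ⟨rfl, ⟨hσ, hτ⟩, hk⟩, rfl⟩
      obtain ⟨π, hπ⟩ := exists_oneLine_eq_glue σ τ
      refine ⟨π, ⟨?_, by rw [hπ, hs, hk]⟩, hπ⟩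
      rw [count132_eq_occ132, hπ, occ132_glue, ← count132_eq_occ132, ← count132_eq_occ132,
        hσ, hτ]
  rw [hS, card_sigma]
  exact sum_congr rfl fun ab _ => card_filter_prod_add_eq (fun σ => count132 σ = 0)
    (fun τ => count132 τ = 0) (fun σ => sf (oneLine σ)) (fun τ => sb (oneLine τ)) k

open PowerSeries

noncomputable def avoiderSeries (s : List ℕ → ℕ) (k : ℕ) : PowerSeries ℚ :=
  mk fun n => (avoiderCount s k n : ℚ)

theorem avoiderSeries_eq {s sf sb : List ℕ → ℕ} (hs : GlueAdditive s sf sb) (k : ℕ) :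
    avoiderSeries s k = C (avoiderCount s k 0 : ℚ) +
      X * ∑ ij ∈ antidiagonal k, avoiderSeries sf ij.1 * avoiderSeries sb ij.2 := by
  ext (_ | n)
  · simp [avoiderSeries]
  · rw [map_add, coeff_C, if_neg n.succ_ne_zero, zero_add, coeff_succ_X_mul, map_sum,
      avoiderSeries, coeff_mk, avoiderCount_succ hs, sum_comm]
    push_cast
    simp only [coeff_mul, avoiderSeries, coeff_mk]

theorem three_le_occ12_of_occ123_pos {l : List ℕ} (h : 0 < occ123 l) : 3 ≤ occ12 l := by
  obtain ⟨x, y, z, hl, hxy, hyz⟩ := (List.tripleCount_pos_iff _).1 h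
  calc 3 = occ12 [x, y, z] := by simp [List.pairCount, hxy, hyz, hxy.trans hyz]
    _ ≤ occ12 l := hl.pairCount_le _

theorem avoiderSeries_occ123_add_occ12 {i : ℕ} (hi : i ≤ 2) :
    avoiderSeries (fun l => occ123 l + occ12 l) i = avoiderSeries occ12 i := by
  refine congrArg PowerSeries.mk (funext fun n => congrArg _ (congrArg card
    (filter_congr fun π _ => and_congr_right fun _ => ?_)))
  have := @three_le_occ12_of_occ123_pos (oneLine π)
  dsimp only
  omega

theorem avoiderCount_occ12_add_length {i : ℕ} (hi : i ≤ 2) (n : ℕ) :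
    avoiderCount (fun l => occ12 l + l.length) i n = if n = i then 1 else 0 := by
  rcases lt_or_ge 2 n with hn | hn
  · rw [if_neg (by omega), avoiderCount, card_eq_zero, filter_eq_empty_iff]
    intro π _ h
    rw [length_oneLine] at h
    omega
  · interval_cases n <;> interval_cases i <;> decide

theorem avoiderSeries_occ12_add_length {i : ℕ} (hi : i ≤ 2) :
    avoiderSeries (fun l => occ12 l + l.length) i = X ^ i := by
  ext n
  rw [avoiderSeries, coeff_mk, avoiderCount_occ12_add_length hi, coeff_X_pow]
  split_ifs <;> simp

theorem solve_system {R : Type*} [CommRing R] {X F₀ F₁ F₂ B₀ B₁ B₂ : R}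
    (hF₀ : F₀ = 1 + X * F₀) (hF₁ : F₁ = X * (F₁ + X * F₀))
    (hF₂ : F₂ = X * (F₂ + (X * F₁ + X ^ 2 * F₀)))
    (hB₀ : B₀ = 1 + X * (F₀ * B₀)) (hB₁ : B₁ = X * (F₀ * B₁ + F₁ * B₀))
    (hB₂ : B₂ = X * (F₀ * B₂ + (F₁ * B₁ + F₂ * B₀))) :
    (1 - 2 * X) ^ 3 * B₂ = X ^ 4 * (1 - X) := by
  have e₀ : (1 - X) * F₀ = 1 := by linear_combination hF₀
  have e₁ : (1 - X) * F₁ = X ^ 2 * F₀ := by linear_combination hF₁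
  have e₂ : (1 - X) * F₂ = X ^ 2 * F₁ + X ^ 3 * F₀ := by linear_combination hF₂
  have d₀ : (1 - 2 * X) * B₀ = 1 - X := by linear_combination (1 - X) * hB₀ + X * B₀ * e₀
  have d₁ : (1 - 2 * X) ^ 2 * B₁ = X ^ 3 := by
    linear_combination (1 - 2 * X) * ((1 - X) * hB₁ + X * B₁ * e₀ + X * B₀ * e₁)
      + X ^ 3 * F₀ * d₀ + X ^ 3 * e₀
  have d₂ : (1 - 2 * X) * B₂ =
      X ^ 3 * (F₀ * B₁) + X * (X ^ 2 * F₁ + X ^ 3 * F₀) * B₀ := by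
    linear_combination (1 - X) * hB₂ + X * B₂ * e₀ + X * B₁ * e₁ + X * B₀ * e₂
  linear_combination (1 - 2 * X) ^ 2 * d₂ + X ^ 3 * F₀ * d₁
    + (X ^ 3 * F₁ + X ^ 4 * F₀) * (1 - 2 * X) * d₀ + X ^ 3 * (1 - 2 * X) * e₁
    + X ^ 4 * (1 - X) * e₀

theorem genfun_no132_2 :
    (1 - 2 * PowerSeries.X) ^ 3 * PowerSeries.mk (fun n => (A n : ℚ)) = PowerSeries.X ^ 4 * (1 - PowerSeries.X) := by
  have hA : PowerSeries.mk (fun n => (A n : ℚ)) = avoiderSeries occ123 2 := by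
    ext n
    simp only [coeff_mk, avoiderSeries, A, avoiderCount, count123_eq_occ123]
  have hF₀ := avoiderSeries_eq glueAdditive_occ12 0
  have hF₁ := avoiderSeries_eq glueAdditive_occ12 1
  have hF₂ := avoiderSeries_eq glueAdditive_occ12 2
  have hB₀ := avoiderSeries_eq glueAdditive_occ123 0
  have hB₁ := avoiderSeries_eq glueAdditive_occ123 1
  have hB₂ := avoiderSeries_eq glueAdditive_occ123 2
  simp only [avoiderCount_zero, List.pairCount, List.tripleCount, ↓reduceIte, Nat.cast_one,
    map_one, HasAntidiagonal.antidiagonal_zero, sum_singleton, zero_le,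
    avoiderSeries_occ12_add_length, pow_zero, one_mul, zero_ne_one, CharP.cast_eq_zero, map_zero,
    Nat.sum_antidiagonal_succ, zero_add, Nat.one_le_ofNat, pow_one, OfNat.zero_ne_ofNat,
    Nat.reduceAdd, Std.le_refl, avoiderSeries_occ123_add_occ12]
    at hF₀ hF₁ hF₂ hB₀ hB₁ hB₂
  rw [hA]
  exact solve_system hF₀ hF₁ hF₂ hB₀ hB₁ hB₂
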